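/- arXiv:1003.0305 — 2 statements merged into one kernel-verified Lean document; each statement's English description precedes it below -/
import Mathlib

section
/- Let S be an asymptotically compact semiflow on a complete metric space X, and let A ⊆ X. If ⋃_{t ≥ t₀} S(t)A is bounded for some t₀ > 0, then the ω-limit set ω(A) is a nonempty compact invariant set of S, and ω(A) attracts A. -/
open Metric Set Filter Topology Bornology

/-- A semiflow on a metric space `X`: a map `S : [0,∞) × X → X`, continuous on
`[0,∞) × X`, with `S 0 x = x` and `S (t+s) x = S t (S s x)` for `t, s ≥ 0`. -/
structure Semiflow (X : Type*) [MetricSpace X] where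
  toFun : ℝ → X → X
  continuousOn : ContinuousOn (fun p : ℝ × X => toFun p.1 p.2) (Set.Ici (0:ℝ) ×ˢ Set.univ)
  map_zero : ∀ x, toFun 0 x = x
  map_add : ∀ (t s : ℝ), 0 ≤ t → 0 ≤ s → ∀ x, toFun (t + s) x = toFun t (toFun s x)

namespace Semiflow

variable {X : Type*} [MetricSpace X] (φ : Semiflow X)

/-- Asymptotic compactness: every bounded sequence `x n`, with times `t n → ∞`,
such that `S (t n) (x n)` is bounded, has a convergent subsequence of images. -/
def AsympCompact : Prop :=
  ∀ (x : ℕ → X) (t : ℕ → ℝ), (∀ n, 0 ≤ t n) →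
    IsBounded (Set.range x) → Tendsto t atTop atTop →
    IsBounded (Set.range fun n => φ.toFun (t n) (x n)) →
    ∃ (y : X) (k : ℕ → ℕ), StrictMono k ∧
      Tendsto (fun n => φ.toFun (t (k n)) (x (k n))) atTop (𝓝 y)

/-- `M` attracts `B`: for every `ε > 0` there is `T > 0` with
`S t B ⊆ B(M,ε)` for all `t > T`. -/
def Attracts (M B : Set X) : Prop :=
  ∀ ε > (0:ℝ), ∃ T > (0:ℝ), ∀ t > T, ∀ x ∈ B, infDist (φ.toFun t x) M < ε

/-- `M` is invariant: `S t M = M` for all `t ≥ 0`. -/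
def Invariant (M : Set X) : Prop :=
  ∀ t ≥ (0:ℝ), φ.toFun t '' M = M

/-- An attractor: a compact invariant set attracting a neighborhood of itself. -/
def IsAttractor (A : Set X) : Prop :=
  IsCompact A ∧ φ.Invariant A ∧ ∃ U : Set X, A ⊆ interior U ∧ φ.Attracts A U

/-- The attraction basin of `A`: points whose orbits converge to `A`. -/
def basin (A : Set X) : Set X :=
  {x | Tendsto (fun t : ℝ => infDist (φ.toFun t x) A) atTop (𝓝 0)}

/-- The ω-limit set of a set `A`. -/
def omegaLimit (A : Set X) : Set X :=
  {y | ∃ (x : ℕ → X) (t : ℕ → ℝ), (∀ n, x n ∈ A) ∧ (∀ n, 0 ≤ t n) ∧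
    Tendsto t atTop atTop ∧ Tendsto (fun n => φ.toFun (t n) (x n)) atTop (𝓝 y)}

/-- A complete trajectory of the semiflow. -/
def IsCompleteTraj (γ : ℝ → X) : Prop :=
  ∀ s t : ℝ, s ≤ t → γ t = φ.toFun (t - s) (γ s)

/-- ω-limit set of a complete trajectory. -/
def trajOmega (γ : ℝ → X) : Set X :=
  {y | ∃ t : ℕ → ℝ, Tendsto t atTop atTop ∧ Tendsto (fun n => γ (t n)) atTop (𝓝 y)}

/-- α-limit set of a complete trajectory. -/
def trajAlpha (γ : ℝ → X) : Set X :=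
  {y | ∃ t : ℕ → ℝ, Tendsto t atTop atBot ∧ Tendsto (fun n => γ (t n)) atTop (𝓝 y)}

/-- The dual repeller of `A` inside `𝒜`. -/
def dualRepeller (𝒜 A : Set X) : Set X :=
  {x ∈ 𝒜 | φ.omegaLimit {x} ∩ A = ∅}

/-- `A` is an attractor of the restricted semiflow on the invariant set `𝒜`:
`A ⊆ 𝒜` is compact, invariant, and attracts a relative neighborhood of itself in `𝒜`. -/
def IsAttractorIn (𝒜 A : Set X) : Prop :=
  A ⊆ 𝒜 ∧ IsCompact A ∧ φ.Invariant A ∧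
    ∃ V : Set X, IsOpen V ∧ A ⊆ V ∧ φ.Attracts A (𝒜 ∩ V)

/-- `M 1, …, M l` is a Morse decomposition of `𝒜` with Morse filtration
`∅ = A 0 ⊊ A 1 ⊊ ⋯ ⊊ A l = 𝒜`. -/
def IsMorseDecompositionWithFiltration (𝒜 : Set X) (l : ℕ) (M A : ℕ → Set X) : Prop :=
  A 0 = (∅ : Set X) ∧ A l = 𝒜 ∧
  (∀ k, 1 ≤ k → k ≤ l → φ.IsAttractorIn 𝒜 (A k)) ∧
  (∀ k, 1 ≤ k → k ≤ l → A (k - 1) ⊂ A k) ∧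
  (∀ k, 1 ≤ k → k ≤ l → M k = A k ∩ φ.dualRepeller 𝒜 (A (k - 1)))

/-- `M 1, …, M l` is a Morse decomposition of `𝒜`. -/
def IsMorseDecomposition (𝒜 : Set X) (l : ℕ) (M : ℕ → Set X) : Prop :=
  ∃ A : ℕ → Set X, φ.IsMorseDecompositionWithFiltration 𝒜 l M A

/-- The Dini derivative of `V` along the semiflow. -/
noncomputable def dini (V : X → ℝ) (x : X) : ℝ :=
  Filter.limsup (fun t : ℝ => (V (φ.toFun t x) - V x) / t) (𝓝[>] (0:ℝ))

end Semiflow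

/-- `A ⊂⊂ B`: the closure of `A` is contained in the interior of `B` and
`dist (A, ∂B) > 0`. -/
def WayInside {X : Type*} [MetricSpace X] (A B : Set X) : Prop :=
  closure A ⊆ interior B ∧ ∃ δ > (0:ℝ), ∀ x ∈ A, ∀ y ∈ frontier B, δ ≤ dist x y

/-- `V` is radially unbounded on the open set `Ω`. -/
def RadiallyUnbounded {X : Type*} [MetricSpace X] (V : X → ℝ) (Ω : Set X) : Prop :=
  ∀ R > (0:ℝ), ∃ B : Set X, IsBounded B ∧ IsClosed B ∧ B ⊆ Ω ∧ WayInside B Ω ∧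
    ∀ x ∈ Ω \ B, R < V x

/-- `F` is a strong deformation retract of `E`. -/
def IsStrongDeformationRetract {X : Type*} [MetricSpace X] (F E : Set X) : Prop :=
  F ⊆ E ∧ ∃ H : ℝ × X → X, ContinuousOn H (Set.Icc (0:ℝ) 1 ×ˢ E) ∧
    (∀ x ∈ E, H (0, x) = x) ∧ (∀ x ∈ E, H (1, x) ∈ F) ∧
    (∀ σ ∈ Set.Icc (0:ℝ) 1, ∀ x ∈ F, H (σ, x) = x) ∧
    (∀ σ ∈ Set.Icc (0:ℝ) 1, ∀ x ∈ E, H (σ, x) ∈ E)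

namespace Semiflow

variable {X : Type*} [MetricSpace X] (φ : Semiflow X)

/-- A Morse–Lyapunov function of the Morse decomposition `M` on `Ω`. -/
def IsMorseLyapunov (Ω : Set X) (l : ℕ) (M : ℕ → Set X) (V : X → ℝ) : Prop :=
  ContinuousOn V Ω ∧
  (∀ k, 1 ≤ k → k ≤ l → ∃ c : ℝ, ∀ x ∈ M k, V x = c) ∧
  (∀ x ∈ Ω \ ⋃ k ∈ Set.Icc 1 l, M k,
    StrictAntiOn (fun t : ℝ => V (φ.toFun t x)) (Set.Ici (0:ℝ)))

/-- A strict Morse–Lyapunov function: the values on the Morse sets are increasing. -/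
def IsStrictMorseLyapunov (Ω : Set X) (l : ℕ) (M : ℕ → Set X) (V : X → ℝ) : Prop :=
  φ.IsMorseLyapunov Ω l M V ∧ ∃ c : ℕ → ℝ,
    (∀ k, 1 ≤ k → k ≤ l → ∀ x ∈ M k, V x = c k) ∧
    (∀ j k, 1 ≤ j → j < k → k ≤ l → c j < c k)

end Semiflow

/-! The orbit tail `⋃_{t ≥ t₀} S t A` is bounded and so is its image `S t₀ A`, so asymptotic
compactness makes every sequence `S (tₙ) xₙ` with `xₙ ∈ A`, `tₙ → ∞` subconverge, and its limit
lies in `ω(A)`. Everything follows from this: nonemptiness directly; compactness by approximating a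
sequence in `ω(A)` by such orbit points; backward invariance by extracting a limit of
`S (tₙ - t) xₙ`; attraction by contradiction with a sequence staying `ε` away from `ω(A)`. -/

namespace Semiflow

variable {X : Type*} [MetricSpace X] {φ : Semiflow X}

theorem continuous_toFun {t : ℝ} (ht : 0 ≤ t) : Continuous (φ.toFun t) :=
  φ.continuousOn.comp_continuous (Continuous.prodMk_right t) fun x => ⟨ht, mem_univ x⟩

theorem mem_omegaLimit_of_tendsto {A : Set X} {x : ℕ → X} {t : ℕ → ℝ} {y : X}
    (hx : ∀ n, x n ∈ A) (ht : Tendsto t atTop atTop)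
    (hy : Tendsto (fun n => φ.toFun (t n) (x n)) atTop (𝓝 y)) : y ∈ φ.omegaLimit A := by
  obtain ⟨N, hN⟩ := eventually_atTop.mp (ht.eventually_ge_atTop 0)
  have hshift := tendsto_add_atTop_nat N
  exact ⟨fun n => x (n + N), fun n => t (n + N), fun n => hx _, fun n => hN _ (by omega),
    ht.comp hshift, hy.comp hshift⟩

theorem exists_dist_lt_of_mem_omegaLimit {A : Set X} {y : X} (hy : y ∈ φ.omegaLimit A)
    (T : ℝ) {ε : ℝ} (hε : 0 < ε) : ∃ x ∈ A, ∃ t ≥ T, dist (φ.toFun t x) y < ε := by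
  obtain ⟨x, t, hx, -, ht, hxy⟩ := hy
  obtain ⟨n, hTn, hn⟩ :=
    ((ht.eventually_ge_atTop T).and (Metric.tendsto_nhds.mp hxy ε hε)).exists
  exact ⟨x n, hx n, t n, hTn, hn⟩

theorem mapsTo_omegaLimit (A : Set X) {t : ℝ} (ht : 0 ≤ t) :
    MapsTo (φ.toFun t) (φ.omegaLimit A) (φ.omegaLimit A) := by
  rintro y ⟨x, s, hx, hs₀, hs, hxy⟩
  refine ⟨x, fun n => t + s n, hx, fun n => add_nonneg ht (hs₀ n),
    tendsto_atTop_add_const_left _ t hs, ?_⟩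
  simp only [φ.map_add t _ ht (hs₀ _)]
  exact ((continuous_toFun ht).tendsto y).comp hxy

namespace AsympCompact

variable {A : Set X} {t₀ : ℝ}

theorem exists_subseq_tendsto_of_le (hac : φ.AsympCompact) (ht₀ : 0 ≤ t₀)
    (hbdd : IsBounded {y : X | ∃ t ≥ t₀, ∃ x ∈ A, y = φ.toFun t x})
    {x : ℕ → X} (hx : ∀ n, x n ∈ A) {s : ℕ → ℝ} (hs₀ : ∀ n, t₀ ≤ s n)
    (hs : Tendsto s atTop atTop) :
    ∃ (y : X) (k : ℕ → ℕ), StrictMono k ∧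
      Tendsto (fun n => φ.toFun (s (k n)) (x (k n))) atTop (𝓝 y) := by
  have hsplit : ∀ n, φ.toFun (s n - t₀) (φ.toFun t₀ (x n)) = φ.toFun (s n) (x n) := fun n => by
    rw [← φ.map_add _ _ (sub_nonneg.mpr (hs₀ n)) ht₀, sub_add_cancel]
  have hstart : IsBounded (range fun n => φ.toFun t₀ (x n)) :=
    hbdd.subset (range_subset_iff.mpr fun n => ⟨t₀, le_rfl, x n, hx n, rfl⟩)
  have himage : IsBounded (range fun n => φ.toFun (s n - t₀) (φ.toFun t₀ (x n))) := by
    simp only [hsplit]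
    exact hbdd.subset (range_subset_iff.mpr fun n => ⟨s n, hs₀ n, x n, hx n, rfl⟩)
  obtain ⟨y, k, hk, hy⟩ := hac _ _ (fun n => sub_nonneg.mpr (hs₀ n)) hstart
    (tendsto_atTop_add_const_right _ (-t₀) hs) himage
  exact ⟨y, k, hk, by simpa only [hsplit] using hy⟩

theorem exists_mem_omegaLimit_subseq_tendsto (hac : φ.AsympCompact) (ht₀ : 0 ≤ t₀)
    (hbdd : IsBounded {y : X | ∃ t ≥ t₀, ∃ x ∈ A, y = φ.toFun t x})
    {x : ℕ → X} (hx : ∀ n, x n ∈ A) {s : ℕ → ℝ} (hs : Tendsto s atTop atTop) :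
    ∃ y ∈ φ.omegaLimit A, ∃ k : ℕ → ℕ, StrictMono k ∧
      Tendsto (fun n => φ.toFun (s (k n)) (x (k n))) atTop (𝓝 y) := by
  obtain ⟨N, hN⟩ := eventually_atTop.mp (hs.eventually_ge_atTop t₀)
  obtain ⟨y, k, hk, hy⟩ := hac.exists_subseq_tendsto_of_le ht₀ hbdd (x := fun n => x (n + N))
    (fun n => hx _) (fun n => hN _ (by omega)) (hs.comp (tendsto_add_atTop_nat N))
  have hk' : StrictMono fun n => k n + N := fun _ _ h => Nat.add_lt_add_right (hk h) N
  exact ⟨y, mem_omegaLimit_of_tendsto (fun n => hx _) (hs.comp hk'.tendsto_atTop) hy, _, hk', hy⟩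

theorem omegaLimit_nonempty (hac : φ.AsympCompact) (ht₀ : 0 ≤ t₀)
    (hbdd : IsBounded {y : X | ∃ t ≥ t₀, ∃ x ∈ A, y = φ.toFun t x}) (hA : A.Nonempty) :
    (φ.omegaLimit A).Nonempty := by
  obtain ⟨a, ha⟩ := hA
  obtain ⟨y, hy, -⟩ := hac.exists_mem_omegaLimit_subseq_tendsto ht₀ hbdd (fun _ => ha)
    tendsto_natCast_atTop_atTop
  exact ⟨y, hy⟩

theorem isCompact_omegaLimit (hac : φ.AsympCompact) (ht₀ : 0 ≤ t₀)
    (hbdd : IsBounded {y : X | ∃ t ≥ t₀, ∃ x ∈ A, y = φ.toFun t x}) :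
    IsCompact (φ.omegaLimit A) := by
  refine IsSeqCompact.isCompact fun y hy => ?_
  choose x hx s hs hxy using fun m =>
    exists_dist_lt_of_mem_omegaLimit (hy m) m (Nat.one_div_pos_of_nat (α := ℝ) (n := m))
  obtain ⟨z, hz, k, hk, hxz⟩ := hac.exists_mem_omegaLimit_subseq_tendsto ht₀ hbdd hx
    (tendsto_atTop_mono hs tendsto_natCast_atTop_atTop)
  refine ⟨z, hz, k, hk, hxz.congr_dist (squeeze_zero (fun _ => dist_nonneg)
    (fun m => (hxy (k m)).le) ?_)⟩
  exact tendsto_one_div_add_atTop_nhds_zero_nat.comp hk.tendsto_atTop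

theorem omegaLimit_subset_image (hac : φ.AsympCompact) (ht₀ : 0 ≤ t₀)
    (hbdd : IsBounded {y : X | ∃ t ≥ t₀, ∃ x ∈ A, y = φ.toFun t x}) {t : ℝ} (ht : 0 ≤ t) :
    φ.omegaLimit A ⊆ φ.toFun t '' φ.omegaLimit A := by
  rintro y ⟨x, s, hx, -, hs, hxy⟩
  obtain ⟨z, hz, k, hk, hxz⟩ := hac.exists_mem_omegaLimit_subseq_tendsto ht₀ hbdd hx
    (s := fun n => s n - t) (tendsto_atTop_add_const_right _ (-t) hs)
  have hsk : Tendsto (fun n => s (k n)) atTop atTop := hs.comp hk.tendsto_atTop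
  have hsplit : ∀ᶠ n in atTop,
      φ.toFun t (φ.toFun (s (k n) - t) (x (k n))) = φ.toFun (s (k n)) (x (k n)) := by
    filter_upwards [hsk.eventually_ge_atTop t] with n hn
    rw [← φ.map_add _ _ ht (sub_nonneg.mpr hn), add_sub_cancel]
  have hlim := (((continuous_toFun ht).tendsto z).comp hxz).congr' hsplit
  exact ⟨z, hz, tendsto_nhds_unique hlim (hxy.comp hk.tendsto_atTop)⟩

theorem attracts_omegaLimit (hac : φ.AsympCompact) (ht₀ : 0 ≤ t₀)
    (hbdd : IsBounded {y : X | ∃ t ≥ t₀, ∃ x ∈ A, y = φ.toFun t x}) :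
    φ.Attracts (φ.omegaLimit A) A := by
  by_contra hfar
  simp only [Attracts] at hfar
  push Not at hfar
  obtain ⟨ε, hε, hfar⟩ := hfar
  choose s hs x hx hxε using fun n : ℕ => hfar (n + 1) n.cast_add_one_pos
  obtain ⟨z, hz, k, -, hxz⟩ := hac.exists_mem_omegaLimit_subseq_tendsto ht₀ hbdd hx
    (tendsto_atTop_mono (fun n => ((lt_add_one _).trans (hs n)).le) tendsto_natCast_atTop_atTop)
  have hdist := ((continuous_infDist_pt (φ.omegaLimit A)).tendsto z).comp hxz
  rw [infDist_zero_of_mem hz] at hdist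
  exact hε.not_ge (ge_of_tendsto hdist (Eventually.of_forall fun n => hxε (k n)))

end AsympCompact

end Semiflow

theorem stmt1_general {X : Type*} [MetricSpace X] (φ : Semiflow X)
    (hac : φ.AsympCompact) (A : Set X) (hA : A.Nonempty)
    (t₀ : ℝ) (ht₀ : 0 < t₀)
    (hbdd : Bornology.IsBounded {y : X | ∃ t ≥ t₀, ∃ x ∈ A, y = φ.toFun t x}) :
    (φ.omegaLimit A).Nonempty ∧ IsCompact (φ.omegaLimit A) ∧
      φ.Invariant (φ.omegaLimit A) ∧ φ.Attracts (φ.omegaLimit A) A :=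
  ⟨hac.omegaLimit_nonempty ht₀.le hbdd hA, hac.isCompact_omegaLimit ht₀.le hbdd,
    fun _ ht => (φ.mapsTo_omegaLimit A ht).image_subset.antisymm
      (hac.omegaLimit_subset_image ht₀.le hbdd ht),
    hac.attracts_omegaLimit ht₀.le hbdd⟩

/-- If `⋃_{t ≥ t₀} S t A` is bounded for some `t₀ > 0` (and `A` is nonempty),
then `ω(A)` is a nonempty compact invariant set which attracts `A`. -/
theorem stmt1 {X : Type*} [MetricSpace X] [CompleteSpace X] (φ : Semiflow X)
    (hac : φ.AsympCompact) (A : Set X) (hA : A.Nonempty)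
    (t₀ : ℝ) (ht₀ : 0 < t₀)
    (hbdd : Bornology.IsBounded {y : X | ∃ t ≥ t₀, ∃ x ∈ A, y = φ.toFun t x}) :
    (φ.omegaLimit A).Nonempty ∧ IsCompact (φ.omegaLimit A) ∧
      φ.Invariant (φ.omegaLimit A) ∧ φ.Attracts (φ.omegaLimit A) A :=
  stmt1_general φ hac A hA t₀ ht₀ hbdd
end

section
/- Let S be an asymptotically compact semiflow on a complete metric space X, 𝒜 an attractor of S, and ℳ = {M₁, …, M_l} a Morse decomposition of 𝒜 with Morse filtration ∅ = A₀ ⊊ A₁ ⊊ ⋯ ⊊ A_l = 𝒜. Then: (i) for every complete trajectory γ in 𝒜, either γ(ℝ) ⊆ M_k for some k, or there are indices i < j such that α(γ) ⊆ M_j and ω(γ) ⊆ M_i; and (ii) the attractors A_k are determined by the Morse sets via A_k = ⋃_{1 ≤ i ≤ k} Wᵘ(M_i), where Wᵘ(M_i) = {γ(0) : γ is a complete trajectory in 𝒜 with α(γ) ⊆ M_i}. -/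
open Metric Set Filter Topology Bornology

/-!
Attraction imposes a dichotomy on the limit sets of a complete trajectory `γ` in `𝒜`: if
`ω(γ)` meets an attracting neighbourhood of `A k`, then `ω(γ) ⊆ A k`; if `α(γ)` meets it, then
all of `γ` lies in `A k`. Let `A i` be the first attractor of the filtration containing the
limit set. It then avoids a neighbourhood of `A (i - 1)`, and being forward invariant it lies
in the dual repeller of `A (i - 1)`, hence in `M i`. If `α(γ) ⊆ M j`, then `γ ⊆ A j`, so the
index of `ω(γ)` is at most `j`, and when the two indices are equal, `γ` itself lies in `M j`.
The same facts, together with a complete trajectory through each point of the invariant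
set `A k`, give `A k = ⋃ i ≤ k, Wᵘ(M i)`.
-/

theorem add_natCeil_neg_nonneg (t : ℝ) : 0 ≤ t + ⌈-t⌉₊ :=
  neg_le_iff_add_nonneg'.1 (Nat.le_ceil (-t))

namespace Semiflow

section LimitSets

variable {X : Type*} [TopologicalSpace X]

def trajLimit (γ : ℝ → X) (l : Filter ℝ) : Set X :=
  {y | ∃ t : ℕ → ℝ, Tendsto t atTop l ∧ Tendsto (fun n => γ (t n)) atTop (𝓝 y)}

theorem trajLimit_subset {γ : ℝ → X} {l : Filter ℝ} {C : Set X} (hC : IsClosed C)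
    (hγ : ∀ t, γ t ∈ C) : trajLimit γ l ⊆ C := by
  rintro y ⟨t, -, hy⟩
  exact hC.mem_of_tendsto hy (Eventually.of_forall fun n => hγ _)

theorem trajLimit_nonempty [FirstCountableTopology X] {γ : ℝ → X} {l : Filter ℝ}
    [l.IsCountablyGenerated] [l.NeBot] {C : Set X} (hC : IsCompact C) (hγ : ∀ t, γ t ∈ C) :
    (trajLimit γ l).Nonempty := by
  obtain ⟨u, hu⟩ := exists_seq_tendsto l
  obtain ⟨y, -, k, hk, hy⟩ := hC.tendsto_subseq fun n => hγ (u n)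
  exact ⟨y, u ∘ k, hu.comp hk.tendsto_atTop, hy⟩

theorem frequently_mem_of_mem_trajLimit {γ : ℝ → X} {l : Filter ℝ} {V : Set X} {y : X}
    (hV : IsOpen V) (hy : y ∈ trajLimit γ l) (hyV : y ∈ V) : ∃ᶠ t in l, γ t ∈ V := by
  obtain ⟨t, ht, hty⟩ := hy
  exact ht.frequently (hty.eventually (hV.mem_nhds hyV)).frequently

end LimitSets

variable {X : Type*} [MetricSpace X] (φ : Semiflow X)

theorem continuous_toFun_s9 {s : ℝ} (hs : 0 ≤ s) : Continuous (φ.toFun s) :=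
  φ.continuousOn.comp_continuous (continuous_const.prodMk continuous_id) fun x => by simp [hs]

theorem Invariant.mapsTo {φ : Semiflow X} {K : Set X} (hK : φ.Invariant K) {t : ℝ}
    (ht : 0 ≤ t) : MapsTo (φ.toFun t) K K := fun x hx => by
  rw [← hK t ht]
  exact mem_image_of_mem _ hx

section Trajectories

variable {φ} {γ : ℝ → X} (hγ : φ.IsCompleteTraj γ)
include hγ

theorem mapsTo_trajLimit {l : Filter ℝ} {s : ℝ} (hs : 0 ≤ s) (hl : Tendsto (· + s) l l) :
    MapsTo (φ.toFun s) (trajLimit γ l) (trajLimit γ l) := by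
  rintro y ⟨t, ht, hty⟩
  refine ⟨fun n => t n + s, hl.comp ht, ?_⟩
  have h : ∀ n, γ (t n + s) = φ.toFun s (γ (t n)) := fun n => by
    rw [hγ (t n) (t n + s) (by linarith), add_sub_cancel_left]
  simp only [h]
  exact ((φ.continuous_toFun_s9 hs).tendsto y).comp hty

theorem omegaLimit_singleton_subset_trajOmega (τ : ℝ) : φ.omegaLimit {γ τ} ⊆ trajOmega γ := by
  rintro y ⟨x, t, hx, ht0, ht, hy⟩
  refine ⟨fun n => τ + t n, tendsto_atTop_add_const_left _ τ ht, ?_⟩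
  have h : ∀ n, γ (τ + t n) = φ.toFun (t n) (x n) := fun n => by
    rw [hγ τ (τ + t n) (by linarith [ht0 n]), mem_singleton_iff.1 (hx n), add_sub_cancel_left]
  simpa only [h] using hy

end Trajectories

theorem subset_dualRepeller {𝒜 L B V : Set X} (hL𝒜 : L ⊆ 𝒜)
    (hL : ∀ t ≥ (0 : ℝ), MapsTo (φ.toFun t) L L) (hV : IsOpen V) (hBV : B ⊆ V)
    (hLV : Disjoint L V) : L ⊆ φ.dualRepeller 𝒜 B := by
  intro y hy
  refine ⟨hL𝒜 hy, eq_empty_iff_forall_notMem.2 ?_⟩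
  rintro z ⟨⟨x, t, hx, ht0, -, hz⟩, hzB⟩
  obtain ⟨n, hn⟩ := (hz.eventually (hV.mem_nhds (hBV hzB))).exists
  rw [mem_singleton_iff.1 (hx n)] at hn
  exact disjoint_left.1 hLV (hL _ (ht0 n) hy) hn

section Attraction

variable {φ} {𝒜 B V : Set X} (hatt : φ.Attracts B (𝒜 ∩ V)) {γ : ℝ → X}
  (hγ : φ.IsCompleteTraj γ) (hγ𝒜 : ∀ t, γ t ∈ 𝒜)
include hatt hγ hγ𝒜

theorem exists_infDist_lt {ε : ℝ} (hε : 0 < ε) :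
    ∃ T, ∀ r s, γ r ∈ V → r + T < s → infDist (γ s) B < ε := by
  obtain ⟨T, hT0, hT⟩ := hatt ε hε
  refine ⟨T, fun r s hr hrs => ?_⟩
  rw [hγ r s (by linarith)]
  exact hT _ (by linarith) _ ⟨hγ𝒜 r, hr⟩

theorem trajOmega_subset_of_inter_nonempty (hB : IsClosed B) (hBne : B.Nonempty)
    (hV : IsOpen V) (hωV : (trajOmega γ ∩ V).Nonempty) : trajOmega γ ⊆ B := by
  obtain ⟨w, hw, hwV⟩ := hωV
  obtain ⟨r, hr⟩ := (frequently_mem_of_mem_trajLimit (l := atTop) hV hw hwV).exists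
  have hlim : Tendsto (fun s => infDist (γ s) B) atTop (𝓝 0) := by
    refine tendsto_order.2 ⟨fun a ha => .of_forall fun s => ha.trans_le infDist_nonneg,
      fun ε hε => ?_⟩
    obtain ⟨T, hT⟩ := exists_infDist_lt hatt hγ hγ𝒜 hε
    filter_upwards [eventually_gt_atTop (r + T)] with s hs using hT r s hr hs
  rintro z ⟨t, ht, hz⟩
  refine (hB.mem_iff_infDist_zero hBne).2 (tendsto_nhds_unique ?_ (hlim.comp ht))
  exact ((continuous_infDist_pt B).tendsto z).comp hz

theorem mem_of_trajAlpha_inter_nonempty (hB : IsClosed B) (hBne : B.Nonempty)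
    (hV : IsOpen V) (hαV : (trajAlpha γ ∩ V).Nonempty) (s : ℝ) : γ s ∈ B := by
  obtain ⟨w, hw, hwV⟩ := hαV
  have hfreq := frequently_atBot.1 (frequently_mem_of_mem_trajLimit (l := atBot) hV hw hwV)
  refine (hB.mem_iff_infDist_zero hBne).2
    (le_antisymm (le_of_forall_pos_le_add fun ε hε => ?_) infDist_nonneg)
  obtain ⟨T, hT⟩ := exists_infDist_lt hatt hγ hγ𝒜 hε
  obtain ⟨r, hrs, hrV⟩ := hfreq (s - T - 1)
  linarith [hT r s hrV (by linarith)]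

theorem range_subset_of_trajAlpha_subset (h𝒜 : IsCompact 𝒜) (hB : IsClosed B) (hV : IsOpen V)
    (hBV : B ⊆ V) (hαB : trajAlpha γ ⊆ B) : range γ ⊆ B := by
  obtain ⟨w, hw⟩ : (trajAlpha γ).Nonempty := trajLimit_nonempty h𝒜 hγ𝒜
  rintro _ ⟨s, rfl⟩
  exact mem_of_trajAlpha_inter_nonempty hatt hγ hγ𝒜 hB ⟨w, hαB hw⟩ hV ⟨w, hw, hBV (hαB hw)⟩ s

end Attraction

section BackwardOrbits

variable {x : ℕ → X} (hx : ∀ n, φ.toFun 1 (x (n + 1)) = x n)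
include hx

theorem toFun_natCast_of_backward (n k : ℕ) : φ.toFun k (x (n + k)) = x n := by
  induction k with
  | zero => simpa using φ.map_zero (x n)
  | succ k ih =>
    rw [Nat.cast_succ, φ.map_add k 1 k.cast_nonneg zero_le_one, ← add_assoc, hx, ih]

theorem toFun_add_natCast_of_backward {t : ℝ} {n m : ℕ} (hnm : n ≤ m) (ht : 0 ≤ t + n) :
    φ.toFun (t + m) (x m) = φ.toFun (t + n) (x n) := by
  obtain ⟨k, rfl⟩ := Nat.exists_eq_add_of_le hnm
  rw [Nat.cast_add, ← add_assoc, φ.map_add _ _ ht k.cast_nonneg, φ.toFun_natCast_of_backward hx]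

/-- Time `t` is read off `x n` for any `n ≥ -t`; `⌈-t⌉₊` is the least choice. -/
theorem isCompleteTraj_of_backward :
    φ.IsCompleteTraj fun t => φ.toFun (t + ⌈-t⌉₊) (x ⌈-t⌉₊) := by
  intro s t hst
  set N := max ⌈-s⌉₊ ⌈-t⌉₊
  have hsN : 0 ≤ s + N := (add_natCeil_neg_nonneg s).trans (by gcongr; exact le_max_left _ _)
  dsimp only
  rw [← φ.toFun_add_natCast_of_backward hx (le_max_left _ _ : _ ≤ N) (add_natCeil_neg_nonneg s),
    ← φ.toFun_add_natCast_of_backward hx (le_max_right _ _ : _ ≤ N) (add_natCeil_neg_nonneg t),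
    ← φ.map_add _ _ (sub_nonneg.2 hst) hsN]
  congr 1
  ring

end BackwardOrbits

theorem exists_backward_orbit {K : Set X} (hK : φ.Invariant K) {p : X} (hp : p ∈ K) :
    ∃ x : ℕ → X, x 0 = p ∧ (∀ n, x n ∈ K) ∧ ∀ n, φ.toFun 1 (x (n + 1)) = x n := by
  have hpre : ∀ y : K, ∃ z : K, φ.toFun 1 z = y := fun y => by
    have hy : (y : X) ∈ φ.toFun 1 '' K := by rw [hK 1 zero_le_one]; exact y.2
    obtain ⟨z, hz, hzy⟩ := hy
    exact ⟨⟨z, hz⟩, hzy⟩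
  choose g hg using hpre
  exact ⟨fun n => g^[n] ⟨p, hp⟩, rfl, fun n => (g^[n] _).2,
    fun n => by simp only [Function.iterate_succ_apply', hg]⟩

theorem exists_isCompleteTraj {K : Set X} (hK : φ.Invariant K) {p : X} (hp : p ∈ K) :
    ∃ γ : ℝ → X, φ.IsCompleteTraj γ ∧ (∀ t, γ t ∈ K) ∧ γ 0 = p := by
  obtain ⟨x, hx0, hxK, hx⟩ := φ.exists_backward_orbit hK hp
  refine ⟨_, φ.isCompleteTraj_of_backward hx,
    fun t => hK.mapsTo (add_natCeil_neg_nonneg t) (hxK _), ?_⟩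
  simp [hx0, φ.map_zero]

namespace IsMorseDecompositionWithFiltration

variable {φ} {𝒜 : Set X} {l : ℕ} {M A : ℕ → Set X}
  (hMD : φ.IsMorseDecompositionWithFiltration 𝒜 l M A)
include hMD

theorem mono {i k : ℕ} (hik : i ≤ k) (hkl : k ≤ l) : A i ⊆ A k := by
  induction k, hik using Nat.le_induction with
  | base => exact subset_rfl
  | succ k hik ih => exact (ih (by omega)).trans (hMD.2.2.2.1 (k + 1) (by omega) hkl).subset

theorem nonempty {k : ℕ} (hk1 : 1 ≤ k) (hkl : k ≤ l) : (A k).Nonempty := by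
  have h01 := hMD.2.2.2.1 1 le_rfl (hk1.trans hkl)
  rw [Nat.sub_self, hMD.1, empty_ssubset] at h01
  exact h01.mono (hMD.mono hk1 hkl)

theorem morseSet_subset {k : ℕ} (hk1 : 1 ≤ k) (hkl : k ≤ l) : M k ⊆ A k := by
  rw [hMD.2.2.2.2 k hk1 hkl]
  exact inter_subset_left

theorem exists_subset_morseSet {L : Set X} (hL𝒜 : L ⊆ 𝒜) (hLne : L.Nonempty)
    (hLinv : ∀ t ≥ (0 : ℝ), MapsTo (φ.toFun t) L L)
    (hL : ∀ B V, IsClosed B → B.Nonempty → IsOpen V → φ.Attracts B (𝒜 ∩ V) →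
      (L ∩ V).Nonempty → L ⊆ B) :
    ∃ i, 1 ≤ i ∧ i ≤ l ∧ L ⊆ M i ∧ Disjoint L (A (i - 1)) ∧ ∀ m, L ⊆ A m → i ≤ m := by
  classical
  obtain ⟨hA0, hAl, hattr, -, hM⟩ := id hMD
  have hex : ∃ i, L ⊆ A i := ⟨l, hAl ▸ hL𝒜⟩
  set i := Nat.find hex
  have hLi : L ⊆ A i := Nat.find_spec hex
  have hi1 : 1 ≤ i := Nat.one_le_iff_ne_zero.2 fun h => by
    rw [h, hA0, subset_empty_iff] at hLi
    exact hLne.ne_empty hLi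
  have hil : i ≤ l := Nat.find_min' hex (hAl ▸ hL𝒜)
  obtain ⟨V, hV, hAV, hLV⟩ : ∃ V, IsOpen V ∧ A (i - 1) ⊆ V ∧ Disjoint L V := by
    rcases hi1.eq_or_lt with h | h
    · exact ⟨∅, isOpen_empty, by rw [← h, Nat.sub_self, hA0], disjoint_empty _⟩
    · obtain ⟨-, hcpt, -, V, hV, hAV, hatt⟩ := hattr (i - 1) (by omega) (by omega)
      refine ⟨V, hV, hAV, ?_⟩
      by_contra hLV
      exact Nat.find_min hex (by omega : i - 1 < i) (hL _ V hcpt.isClosed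
        (hMD.nonempty (by omega) (by omega)) hV hatt (not_disjoint_iff_nonempty_inter.1 hLV))
  refine ⟨i, hi1, hil, ?_, hLV.mono_right hAV, fun m hm => Nat.find_min' hex hm⟩
  rw [hM i hi1 hil]
  exact subset_inter hLi (φ.subset_dualRepeller hL𝒜 hLinv hV hAV hLV)

theorem range_subset_morseSet {γ : ℝ → X} (hγ : φ.IsCompleteTraj γ) (hγ𝒜 : ∀ t, γ t ∈ 𝒜)
    {i : ℕ} (hi1 : 1 ≤ i) (hil : i ≤ l) (hγA : range γ ⊆ A i)
    (hω : Disjoint (trajOmega γ) (A (i - 1))) : range γ ⊆ M i := by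
  rintro _ ⟨τ, rfl⟩
  rw [hMD.2.2.2.2 i hi1 hil]
  exact ⟨hγA ⟨τ, rfl⟩, hγ𝒜 τ, disjoint_iff_inter_eq_empty.1
    (hω.mono_left (omegaLimit_singleton_subset_trajOmega hγ τ))⟩

section CompleteTrajectory

variable (h𝒜 : IsCompact 𝒜) {γ : ℝ → X} (hγ : φ.IsCompleteTraj γ) (hγ𝒜 : ∀ t, γ t ∈ 𝒜)
include h𝒜 hγ hγ𝒜

theorem exists_trajOmega_subset_morseSet :
    ∃ i, 1 ≤ i ∧ i ≤ l ∧ trajOmega γ ⊆ M i ∧ Disjoint (trajOmega γ) (A (i - 1)) ∧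
      ∀ m, trajOmega γ ⊆ A m → i ≤ m :=
  hMD.exists_subset_morseSet (trajLimit_subset h𝒜.isClosed hγ𝒜) (trajLimit_nonempty h𝒜 hγ𝒜)
    (fun _ ht => mapsTo_trajLimit hγ ht (tendsto_atTop_add_const_right _ _ tendsto_id))
    fun _ _ hB hBne hV hatt => trajOmega_subset_of_inter_nonempty hatt hγ hγ𝒜 hB hBne hV

theorem exists_trajAlpha_subset_morseSet :
    ∃ j, 1 ≤ j ∧ j ≤ l ∧ trajAlpha γ ⊆ M j ∧ ∀ m, trajAlpha γ ⊆ A m → j ≤ m := by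
  obtain ⟨j, hj1, hjl, hαM, -, hmin⟩ := hMD.exists_subset_morseSet
    (trajLimit_subset h𝒜.isClosed hγ𝒜) (trajLimit_nonempty h𝒜 hγ𝒜)
    (fun _ ht => mapsTo_trajLimit hγ ht (tendsto_atBot_add_const_right _ _ tendsto_id))
    fun _ _ hB hBne hV hatt hαV =>
      trajLimit_subset hB (mem_of_trajAlpha_inter_nonempty hatt hγ hγ𝒜 hB hBne hV hαV)
  exact ⟨j, hj1, hjl, hαM, hmin⟩

theorem range_subset_of_trajAlpha_subset {k : ℕ} (hk1 : 1 ≤ k) (hkl : k ≤ l)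
    (hαA : trajAlpha γ ⊆ A k) : range γ ⊆ A k := by
  obtain ⟨-, hcpt, -, V, hV, hAV, hatt⟩ := hMD.2.2.1 k hk1 hkl
  exact Semiflow.range_subset_of_trajAlpha_subset hatt hγ hγ𝒜 h𝒜 hcpt.isClosed hV hAV hαA

end CompleteTrajectory

end IsMorseDecompositionWithFiltration

end Semiflow

theorem stmt9_general {X : Type*} [MetricSpace X] (φ : Semiflow X)
    (𝒜 : Set X) (h𝒜 : φ.IsAttractor 𝒜)
    (l : ℕ) (M A : ℕ → Set X)
    (hMD : φ.IsMorseDecompositionWithFiltration 𝒜 l M A) :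
    (∀ γ : ℝ → X, φ.IsCompleteTraj γ → (∀ t, γ t ∈ 𝒜) →
      (∃ k, 1 ≤ k ∧ k ≤ l ∧ Set.range γ ⊆ M k) ∨
      (∃ i j, 1 ≤ i ∧ i < j ∧ j ≤ l ∧
        Semiflow.trajAlpha γ ⊆ M j ∧ Semiflow.trajOmega γ ⊆ M i)) ∧
    (∀ k, 1 ≤ k → k ≤ l →
      A k = {p : X | ∃ γ : ℝ → X, φ.IsCompleteTraj γ ∧ (∀ t, γ t ∈ 𝒜) ∧ γ 0 = p ∧
        ∃ i, 1 ≤ i ∧ i ≤ k ∧ Semiflow.trajAlpha γ ⊆ M i}) := by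
  have h𝒜c : IsCompact 𝒜 := h𝒜.1
  obtain ⟨-, -, hattr, -, -⟩ := id hMD
  refine ⟨fun γ hγ hγ𝒜 => ?_, fun k hk1 hkl => ?_⟩
  · obtain ⟨i, hi1, hil, hωM, hωA, hmin⟩ := hMD.exists_trajOmega_subset_morseSet h𝒜c hγ hγ𝒜
    obtain ⟨j, hj1, hjl, hαM, -⟩ := hMD.exists_trajAlpha_subset_morseSet h𝒜c hγ hγ𝒜
    have hγA : range γ ⊆ A j := hMD.range_subset_of_trajAlpha_subset h𝒜c hγ hγ𝒜 hj1 hjl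
      (hαM.trans (hMD.morseSet_subset hj1 hjl))
    have hij : i ≤ j := hmin j <|
      Semiflow.trajLimit_subset (hattr j hj1 hjl).2.1.isClosed fun t => hγA ⟨t, rfl⟩
    rcases hij.eq_or_lt with rfl | hij
    · exact Or.inl ⟨i, hi1, hil, hMD.range_subset_morseSet hγ hγ𝒜 hi1 hil hγA hωA⟩
    · exact Or.inr ⟨i, j, hi1, hij, hjl, hαM, hωM⟩
  · obtain ⟨hA𝒜, hcpt, hinv, -⟩ := hattr k hk1 hkl
    ext p
    constructor
    · intro hp
      obtain ⟨γ, hγ, hγA, rfl⟩ := φ.exists_isCompleteTraj hinv hp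
      have hγ𝒜 : ∀ t, γ t ∈ 𝒜 := fun t => hA𝒜 (hγA t)
      obtain ⟨j, hj1, -, hαM, hmin⟩ := hMD.exists_trajAlpha_subset_morseSet h𝒜c hγ hγ𝒜
      exact ⟨γ, hγ, hγ𝒜, rfl, j, hj1, hmin k (Semiflow.trajLimit_subset hcpt.isClosed hγA), hαM⟩
    · rintro ⟨γ, hγ, hγ𝒜, rfl, i, hi1, hik, hαM⟩
      have hαA : Semiflow.trajAlpha γ ⊆ A k :=
        (hαM.trans (hMD.morseSet_subset hi1 (hik.trans hkl))).trans (hMD.mono hik hkl)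
      exact hMD.range_subset_of_trajAlpha_subset h𝒜c hγ hγ𝒜 hk1 hkl hαA ⟨0, rfl⟩

/-- (i) Every complete trajectory in `𝒜` either lies in some Morse set, or
connects `M j` to `M i` with `i < j`; (ii) the filtration attractors are the unions of the
unstable sets of the Morse sets. -/
theorem stmt9 {X : Type*} [MetricSpace X] [CompleteSpace X] (φ : Semiflow X)
    (hac : φ.AsympCompact) (𝒜 : Set X) (h𝒜 : φ.IsAttractor 𝒜)
    (l : ℕ) (hl : 1 ≤ l) (M A : ℕ → Set X)
    (hMD : φ.IsMorseDecompositionWithFiltration 𝒜 l M A) :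
    (∀ γ : ℝ → X, φ.IsCompleteTraj γ → (∀ t, γ t ∈ 𝒜) →
      (∃ k, 1 ≤ k ∧ k ≤ l ∧ Set.range γ ⊆ M k) ∨
      (∃ i j, 1 ≤ i ∧ i < j ∧ j ≤ l ∧
        Semiflow.trajAlpha γ ⊆ M j ∧ Semiflow.trajOmega γ ⊆ M i)) ∧
    (∀ k, 1 ≤ k → k ≤ l →
      A k = {p : X | ∃ γ : ℝ → X, φ.IsCompleteTraj γ ∧ (∀ t, γ t ∈ 𝒜) ∧ γ 0 = p ∧
        ∃ i, 1 ≤ i ∧ i ≤ k ∧ Semiflow.trajAlpha γ ⊆ M i}) :=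
  stmt9_general φ 𝒜 h𝒜 l M A hMD
end
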